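/- Let w be a word in {1',1,2',2} in canonical form whose lattice walk ends at a point with x-coordinate 0. Then the unprimed lowering operator F (defined via final F-critical substrings) is undefined on w: w contains no F-critical substring of type 1F-4F occurring after all type-5F substrings. More simply: if the endpoint of the walk has x = 0, then F(w) = ∅. -/
import Mathlib


inductive SLetter : Type
  | one' : SLetter
  | one : SLetter
  | two' : SLetter
  | two : SLetter
  deriving DecidableEq

open SLetter

/-- One step of the lattice walk: from position `p`, the letter `l` moves as follows.
On the axes (`p.1 = 0` or `p.2 = 0`), `1'` and `1` step east while `2'` and `2` step north;
off the axes, `1'` steps east, `1` south, `2'` west, and `2` north. -/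
def walkStep (p : ℤ × ℤ) (l : SLetter) : ℤ × ℤ :=
  if p.1 = 0 ∨ p.2 = 0 then
    match l with
    | one' | one => (p.1 + 1, p.2)
    | two' | two => (p.1, p.2 + 1)
  else
    match l with
    | one' => (p.1 + 1, p.2)
    | one => (p.1, p.2 - 1)
    | two' => (p.1 - 1, p.2)
    | two => (p.1, p.2 + 1)

/-- The endpoint of the lattice walk of the word `w` started at `p`. -/
def walk (p : ℤ × ℤ) (w : List SLetter) : ℤ × ℤ :=
  w.foldl walkStep p

/-- Rank of a letter in the order `1' < 1 < 2' < 2`. -/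
def rank : SLetter → ℕ
  | one' => 0
  | one => 1
  | two' => 2
  | two => 3

/-- Whether a letter is primed. -/
def primed : SLetter → Bool
  | one' => true
  | two' => true
  | _ => false

/-- Number of `1`-valued letters (`1` or `1'`) of `w`. -/
def wt1 (w : List SLetter) : ℕ :=
  (w.filter fun l => decide (l = one ∨ l = one')).length

/-- Number of `2`-valued letters (`2` or `2'`) of `w`. -/
def wt2 (w : List SLetter) : ℕ :=
  (w.filter fun l => decide (l = two ∨ l = two')).length

/-- The standardization of `w`: position `j` receives the number of positions `j'` whose
letter is smaller, ties among equal unprimed letters broken left-to-right and ties among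
equal primed letters broken right-to-left.  (Numbers here start from `0` rather than `1`.) -/
def stdList (w : List SLetter) : List ℕ :=
  (List.range w.length).map fun j =>
    ((List.range w.length).filter fun j' =>
      decide (rank (w.getD j' one) < rank (w.getD j one) ∨
        (rank (w.getD j' one) = rank (w.getD j one) ∧
          (if primed (w.getD j one) then j < j' else j' < j)))).length

/-- Canonicalization: unprime the first letter of each numerical value.
The booleans record whether a `1`-valued (resp. `2`-valued) letter has been seen. -/
def canonAux : Bool → Bool → List SLetter → List SLetter
  | _, _, [] => []
  | s1, s2, one' :: ls => (if s1 then one' else one) :: canonAux true s2 ls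
  | _, s2, one :: ls => one :: canonAux true s2 ls
  | s1, s2, two' :: ls => (if s2 then two' else two) :: canonAux s1 true ls
  | s1, _, two :: ls => two :: canonAux s1 true ls

/-- The canonical form of a word. -/
def canonize (w : List SLetter) : List SLetter := canonAux false false w

/-- A word is in canonical form if the first letter of each numerical value is unprimed. -/
def IsCanonical (w : List SLetter) : Prop := canonize w = w

/-- Type 1F critical substring: `1 (1')* 2'` occupying indices `k..l` of `v`, located at
`y = 0` or at `y = 1, x ≥ 1`. -/
def Crit1F (v : List SLetter) (k l : ℕ) : Prop :=
  k < l ∧ l < v.length ∧ v.getD k SLetter.one = SLetter.one ∧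
    v.getD l SLetter.one = SLetter.two' ∧
    (∀ m, k < m → m < l → v.getD m SLetter.one = SLetter.one') ∧
    ((walk (0, 0) (v.take k)).2 = 0 ∨
      ((walk (0, 0) (v.take k)).2 = 1 ∧ 1 ≤ (walk (0, 0) (v.take k)).1))

/-- Type 2F critical substring: `1 (2)* 1'` occupying indices `k..l` of `v`, located at
`x = 0` or at `x = 1, y ≥ 1`. -/
def Crit2F (v : List SLetter) (k l : ℕ) : Prop :=
  k < l ∧ l < v.length ∧ v.getD k SLetter.one = SLetter.one ∧
    v.getD l SLetter.one = SLetter.one' ∧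
    (∀ m, k < m → m < l → v.getD m SLetter.one = SLetter.two) ∧
    ((walk (0, 0) (v.take k)).1 = 0 ∨
      ((walk (0, 0) (v.take k)).1 = 1 ∧ 1 ≤ (walk (0, 0) (v.take k)).2))

/-- Type 3F critical substring: a single `1` at `y = 0`. -/
def Crit3F (v : List SLetter) (k : ℕ) : Prop :=
  k < v.length ∧ v.getD k SLetter.one = SLetter.one ∧ (walk (0, 0) (v.take k)).2 = 0

/-- Type 4F critical substring: a single `1'` at `x = 0`. -/
def Crit4F (v : List SLetter) (k : ℕ) : Prop :=
  k < v.length ∧ v.getD k SLetter.one = SLetter.one' ∧ (walk (0, 0) (v.take k)).1 = 0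

/-- Type 5F critical substring: a single `1` or `2'` at `x = 1, y ≥ 1` (stepping south
or west respectively). -/
def Crit5F (v : List SLetter) (k : ℕ) : Prop :=
  k < v.length ∧
    (v.getD k SLetter.one = SLetter.one ∨ v.getD k SLetter.one = SLetter.two') ∧
    (walk (0, 0) (v.take k)).1 = 1 ∧ 1 ≤ (walk (0, 0) (v.take k)).2

/-- `w` has an `F`-critical substring of type `t` occupying indices `k..l` in some
representative `v` of `w` (a word with the same canonical form). -/
def CritAt (w : List SLetter) (k l t : ℕ) : Prop :=
  ∃ v, canonize v = w ∧
    ((t = 1 ∧ Crit1F v k l) ∨ (t = 2 ∧ Crit2F v k l) ∨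
     (t = 3 ∧ l = k ∧ Crit3F v k) ∨ (t = 4 ∧ l = k ∧ Crit4F v k) ∨
     (t = 5 ∧ l = k ∧ Crit5F v k))

/-- `F(w)` is defined: the final `F`-critical substring of `w` (latest starting index,
longest in case of a tie) exists and does not have type 5F. -/
def FDefined (w : List SLetter) : Prop :=
  ∃ k l t, t ≠ 5 ∧ CritAt w k l t ∧
    ∀ k' l' t', CritAt w k' l' t' → k' < k ∨ (k' = k ∧ l' ≤ l)

lemma walk_cons (p : ℤ × ℤ) (l : SLetter) (ls : List SLetter) :
    walk p (l :: ls) = walk (walkStep p l) ls := rfl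

lemma walk_nonneg (v : List SLetter) (p : ℤ × ℤ) (h1 : 0 ≤ p.1) (h2 : 0 ≤ p.2) :
    0 ≤ (walk p v).1 ∧ 0 ≤ (walk p v).2 := by
  induction v generalizing p with
  | nil => exact ⟨h1, h2⟩
  | cons l ls ih =>
    rw [walk_cons]
    have h : 0 ≤ (walkStep p l).1 ∧ 0 ≤ (walkStep p l).2 := by
      unfold walkStep
      split <;> cases l <;> simp <;> omega
    exact ih _ h.1 h.2

lemma walk_take_succ (p : ℤ × ℤ) (v : List SLetter) (a : ℕ) (h : a < v.length) :
    walk p (v.take (a + 1)) = walkStep (walk p (v.take a)) (v.getD a one) := by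
  have ht : v.take (a + 1) = v.take a ++ [v[a]] := by
    rw [List.take_succ, List.getElem?_eq_getElem h]
    rfl
  rw [ht, List.getD_eq_getElem v one h]
  simp only [walk, List.foldl_append, List.foldl_cons, List.foldl_nil]

lemma step_east (p : ℤ × ℤ) (l : SLetter) (h : l = one ∨ l = one') (h1 : 0 ≤ p.1) :
    1 ≤ (walkStep p l).1 := by
  unfold walkStep
  rcases h with h | h <;> subst h <;> split <;> simp <;> omega

lemma step_x_cases (p : ℤ × ℤ) (h2 : 0 ≤ p.2) (l : SLetter) :
    (walkStep p l).1 = p.1 + 1 ∨ (walkStep p l).1 = p.1 ∨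
      ((walkStep p l).1 = p.1 - 1 ∧ l = two' ∧ 1 ≤ p.2) := by
  unfold walkStep
  split <;> cases l <;> simp <;> omega

lemma exists_west (v : List SLetter) (hvx : (walk (0, 0) v).1 = 0) :
    ∀ n a, v.length - a ≤ n → a ≤ v.length → 1 ≤ (walk (0, 0) (v.take a)).1 →
    ∃ m, a ≤ m ∧ m < v.length ∧ v.getD m one = two' ∧
      (walk (0, 0) (v.take m)).1 = 1 ∧ 1 ≤ (walk (0, 0) (v.take m)).2 := by
  intro n
  induction n with
  | zero =>
    intro a hn ha hx1
    have : a = v.length := by omega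
    subst this
    rw [List.take_length] at hx1
    omega
  | succ n ih =>
    intro a hn ha hx1
    rcases eq_or_lt_of_le ha with heq | hlt
    · subst heq
      rw [List.take_length] at hx1
      omega
    · have hnn := walk_nonneg (v.take a) (0, 0) le_rfl le_rfl
      have hstep := walk_take_succ (0, 0) v a hlt
      rcases step_x_cases (walk (0, 0) (v.take a)) hnn.2 (v.getD a one) with h | h | ⟨h, hl, hy⟩
      · obtain ⟨m, hm⟩ := ih (a + 1) (by omega) hlt (by rw [hstep]; omega)
        exact ⟨m, by omega, hm.2⟩
      · obtain ⟨m, hm⟩ := ih (a + 1) (by omega) hlt (by rw [hstep]; omega)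
        exact ⟨m, by omega, hm.2⟩
      · -- west step; either x stays ≥ 1 afterwards or we found our m at a
        rcases le_or_gt 2 (walk (0, 0) (v.take a)).1 with hge | hlt1
        · obtain ⟨m, hm⟩ := ih (a + 1) (by omega) hlt (by rw [hstep]; omega)
          exact ⟨m, by omega, hm.2⟩
        · exact ⟨a, le_rfl, hlt, hl, by omega, hy⟩

lemma canonAux_length : ∀ (s1 s2 : Bool) (v : List SLetter),
    (canonAux s1 s2 v).length = v.length := by
  intro s1 s2 v
  induction v generalizing s1 s2 with
  | nil => rfl
  | cons l ls ih => cases l <;> simp [canonAux, ih]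

lemma canonAux_walk (v : List SLetter) : ∀ (s1 s2 : Bool) (p : ℤ × ℤ),
    (s1 = false → p.1 = 0) → (s2 = false → p.2 = 0) →
    ∀ n, walk p ((canonAux s1 s2 v).take n) = walk p (v.take n) := by
  induction v with
  | nil => intro s1 s2 p _ _ n; rfl
  | cons l ls ih =>
    intro s1 s2 p h1 h2 n
    cases n with
    | zero => rfl
    | succ n =>
      cases l with
      | one' =>
        have hs : walkStep p (if s1 then one' else one) = walkStep p one' := by
          cases s1 with
          | false =>
            have hp := h1 rfl
            simp only [if_neg (by simp : ¬ (false = true))]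
            unfold walkStep
            rw [if_pos (Or.inl hp), if_pos (Or.inl hp)]
          | true => rfl
        have hy : (walkStep p one').2 = p.2 := by
          unfold walkStep; split <;> rfl
        show walk p (((if s1 then one' else one) :: canonAux true s2 ls).take (n+1))
            = walk p (((one' : SLetter) :: ls).take (n+1))
        rw [List.take_succ_cons, List.take_succ_cons, walk_cons, walk_cons, hs]
        exact ih true s2 _ (by simp) (fun h => by rw [hy]; exact h2 h) n
      | one =>
        have hy : s2 = false → (walkStep p one).2 = p.2 := by
          intro h
          have hp := h2 h
          unfold walkStep
          rw [if_pos (Or.inr hp)]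
        show walk p (((one : SLetter) :: canonAux true s2 ls).take (n+1))
            = walk p (((one : SLetter) :: ls).take (n+1))
        rw [List.take_succ_cons, List.take_succ_cons, walk_cons, walk_cons]
        exact ih true s2 _ (by simp) (fun h => by rw [hy h]; exact h2 h) n
      | two' =>
        have hs : walkStep p (if s2 then two' else two) = walkStep p two' := by
          cases s2 with
          | false =>
            have hp := h2 rfl
            simp only [if_neg (by simp : ¬ (false = true))]
            unfold walkStep
            rw [if_pos (Or.inr hp), if_pos (Or.inr hp)]
          | true => rfl
        have hx' : s1 = false → (walkStep p two').1 = p.1 := by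
          intro h
          have hp := h1 h
          unfold walkStep
          rw [if_pos (Or.inl hp)]
        show walk p (((if s2 then two' else two) :: canonAux s1 true ls).take (n+1))
            = walk p (((two' : SLetter) :: ls).take (n+1))
        rw [List.take_succ_cons, List.take_succ_cons, walk_cons, walk_cons, hs]
        exact ih s1 true _ (fun h => by rw [hx' h]; exact h1 h) (by simp) n
      | two =>
        have hx' : s1 = false → (walkStep p two).1 = p.1 := by
          intro h
          have hp := h1 h
          unfold walkStep
          rw [if_pos (Or.inl hp)]
        show walk p (((two : SLetter) :: canonAux s1 true ls).take (n+1))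
            = walk p (((two : SLetter) :: ls).take (n+1))
        rw [List.take_succ_cons, List.take_succ_cons, walk_cons, walk_cons]
        exact ih s1 true _ (fun h => by rw [hx' h]; exact h1 h) (by simp) n

lemma canonize_walk (v : List SLetter) (n : ℕ) :
    walk (0, 0) ((canonize v).take n) = walk (0, 0) (v.take n) :=
  canonAux_walk v false false (0, 0) (fun _ => rfl) (fun _ => rfl) n

/-- If the endpoint of the lattice walk of `w` has `x = 0`, then `F(w) = ∅`. -/
theorem stmt_14 (w : List SLetter) (hw : IsCanonical w)
    (hx : (walk (0, 0) w).1 = 0) : ¬ FDefined w := by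
  rintro ⟨k, l, t, ht5, ⟨v, hv, hcrit⟩, hfinal⟩
  have hlet : k < v.length ∧ (v.getD k one = one ∨ v.getD k one = one') := by
    rcases hcrit with ⟨_, h⟩ | ⟨_, h⟩ | ⟨_, _, h⟩ | ⟨_, _, h⟩ | ⟨h5, _⟩
    · exact ⟨lt_trans h.1 h.2.1, Or.inl h.2.2.1⟩
    · exact ⟨lt_trans h.1 h.2.1, Or.inl h.2.2.1⟩
    · exact ⟨h.1, Or.inl h.2.1⟩
    · exact ⟨h.1, Or.inr h.2.1⟩
    · exact absurd h5 ht5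
  have hlen : (canonize v).length = v.length := canonAux_length false false v
  have hvx : (walk (0, 0) v).1 = 0 := by
    have h := canonize_walk v v.length
    have hwl : w.length = v.length := by rw [← hv]; exact hlen
    rw [hv, List.take_length, ← hwl, List.take_length] at h
    rw [← h]; exact hx
  have hnn := walk_nonneg (v.take k) (0, 0) le_rfl le_rfl
  have hx1 : 1 ≤ (walk (0, 0) (v.take (k + 1))).1 := by
    rw [walk_take_succ (0, 0) v k hlet.1]
    exact step_east _ _ hlet.2 hnn.1
  obtain ⟨m, hmk, hmlen, hm2', hmx, hmy⟩ :=
    exists_west v hvx (v.length - (k + 1)) (k + 1) le_rfl hlet.1 hx1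
  have hcrit5 : CritAt w m m 5 :=
    ⟨v, hv, Or.inr (Or.inr (Or.inr (Or.inr ⟨rfl, rfl, hmlen, Or.inr hm2', hmx, hmy⟩)))⟩
  rcases hfinal m m 5 hcrit5 with h | ⟨h, _⟩ <;> omega
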